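/- Let (α_n : n ≥ 0) be a sequence of bounded operators on 𝓗 and let λ ∈ ℝ be such that the limit C(λ) = lim_{n→∞} (1/‖α_n a_n^*‖)·sym([[α_n a_n^*, −(λ·Id − b_n) a_{n-1}^{-1} α_{n-1} a_n], [0, a_n^* a_{n-1}^{-1} α_{n-1} a_n]]) exists in the operator norm and is a strictly positive operator on 𝓗 ⊕ 𝓗, and assume ∑_{n≥0} 1/‖α_n a_n^*‖ = ∞. If for a nonzero α ∈ 𝓗 ⊕ 𝓗 one has liminf_{n→∞} S_n(α, λ) > 0, then the generalised eigenvector u associated with λ with (u_0, u_1)ᵗ = α does not belong to ℓ²(ℕ;𝓗). -/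

import Mathlib

open ContinuousLinearMap Filter
open scoped ENNReal NNReal
noncomputable section

variable {H : Type*} [NormedAddCommGroup H] [InnerProductSpace ℂ H] [CompleteSpace H]

/-- The Hilbert space direct sum `𝓗 ⊕ 𝓗`. -/
abbrev H2 (H : Type*) [NormedAddCommGroup H] [InnerProductSpace ℂ H] : Type _ :=
  WithLp 2 (H × H)

/-- The column vector `(x, y)ᵗ` as an element of `𝓗 ⊕ 𝓗`. -/
def pr (x y : H) : H2 H := (WithLp.equiv 2 (H × H)).symm (x, y)

/-- The block operator `[[A, B], [C, D]]` on `𝓗 ⊕ 𝓗`. -/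
def blk (A B C D : H →L[ℂ] H) : H2 H →L[ℂ] H2 H :=
  ((WithLp.prodContinuousLinearEquiv 2 ℂ H H).symm : (H × H) →L[ℂ] H2 H) ∘L
    ((A ∘L ContinuousLinearMap.fst ℂ H H + B ∘L ContinuousLinearMap.snd ℂ H H).prod
      (C ∘L ContinuousLinearMap.fst ℂ H H + D ∘L ContinuousLinearMap.snd ℂ H H)) ∘L
    ((WithLp.prodContinuousLinearEquiv 2 ℂ H H) : H2 H →L[ℂ] (H × H))

/-- The real part `sym X = (X + X^*)/2` of a bounded operator. -/
def sym {E : Type*} [NormedAddCommGroup E] [InnerProductSpace ℂ E] [CompleteSpace E]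
    (X : E →L[ℂ] E) : E →L[ℂ] E :=
  (2 : ℂ)⁻¹ • (X + ContinuousLinearMap.adjoint X)

/-- `X` is strictly positive: `⟨Xv, v⟩ ≥ c‖v‖²` for some `c > 0`. -/
def StrictlyPos {E : Type*} [NormedAddCommGroup E] [InnerProductSpace ℂ E] [CompleteSpace E]
    (X : E →L[ℂ] E) : Prop :=
  ∃ c > (0 : ℝ), ∀ v : E, c * ‖v‖ ^ 2 ≤ (inner ℂ (X v) v : ℂ).re

/-- `X'` is a two-sided bounded inverse of `X`. -/
def Inverts (X X' : H →L[ℂ] H) : Prop := X' ∘L X = 1 ∧ X ∘L X' = 1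

/-- The formal Jacobi matrix `𝒜`: `(𝒜u)₀ = b₀u₀ + a₀u₁`,
`(𝒜u)ₙ = aₙ₋₁^* uₙ₋₁ + bₙ uₙ + aₙ uₙ₊₁` for `n ≥ 1`. -/
def jacobiA (a b : ℕ → H →L[ℂ] H) (u : ℕ → H) : ℕ → H
  | 0 => b 0 (u 0) + a 0 (u 1)
  | n + 1 => adjoint (a n) (u n) + b (n + 1) (u (n + 1)) + a (n + 1) (u (n + 2))

/-- The generalised eigenvector recurrence
`aₙ₋₁^* uₙ₋₁ + bₙ uₙ + aₙ uₙ₊₁ = z uₙ` for all `n ≥ 1`. -/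
def GenEigRec (a b : ℕ → H →L[ℂ] H) (z : ℂ) (u : ℕ → H) : Prop :=
  ∀ n : ℕ, adjoint (a n) (u n) + b (n + 1) (u (n + 1)) + a (n + 1) (u (n + 2)) = z • u (n + 1)

/-- `u` is a generalised eigenvector associated with `z`. -/
def IsGenEig (a b : ℕ → H →L[ℂ] H) (z : ℂ) (u : ℕ → H) : Prop :=
  u ≠ 0 ∧ GenEigRec a b z u

/-- `u` belongs to `ℓ²(ℕ; 𝓗)`. -/
def MemL2 (u : ℕ → H) : Prop := Summable fun n => ‖u n‖ ^ 2

/-- The transfer matrix `Bₙ(z)`; here `a'` is the sequence of inverses `aₙ⁻¹`. -/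
def transfer (a a' b : ℕ → H →L[ℂ] H) (z : ℂ) (n : ℕ) : H2 H →L[ℂ] H2 H :=
  blk 0 1 (-(a' n ∘L adjoint (a (n - 1)))) (a' n ∘L (z • (1 : H →L[ℂ] H) - b n))

/-- `prodD B n k = B (n+k-1) ∘ ⋯ ∘ B n`. -/
def prodD (B : ℕ → (H2 H →L[ℂ] H2 H)) : ℕ → ℕ → (H2 H →L[ℂ] H2 H)
  | _, 0 => 1
  | n, k + 1 => B (n + k) ∘L prodD B n k

/-- `sym (diag(a_{n+N-1}, a_{n+N-1}^*) · E · Xₙ(z))` where `Xₙ(z) = B_{n+N-1}(z)⋯Bₙ(z)`. -/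
def turanOp (a a' b : ℕ → H →L[ℂ] H) (N : ℕ) (z : ℂ) (n : ℕ) : H2 H →L[ℂ] H2 H :=
  sym (blk (a (n + N - 1)) 0 0 (adjoint (a (n + N - 1))) ∘L blk 0 (-1) 1 0 ∘L
    prodD (transfer a a' b z) n N)

/-- The `N`-shifted Turán determinant `Sₙ(α, z)` of a generalised eigenvector `u`. -/
def turanS (a a' b : ℕ → H →L[ℂ] H) (N : ℕ) (z : ℂ) (u : ℕ → H) (n : ℕ) : ℝ :=
  (inner ℂ (turanOp a a' b N z n (pr (u (n - 1)) (u n))) (pr (u (n - 1)) (u n)) : ℂ).re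

/-- The family `{Q^z : z ∈ K}` is uniformly non-degenerated on `K`, where
`Qₙ^z(v) = ‖a_{n+N-1}‖⁻¹ ⟨sym(diag(a_{n+N-1}, a_{n+N-1}^*)·E·Xₙ(z)) v, v⟩`. -/
def UnifNonDeg (a a' b : ℕ → H →L[ℂ] H) (N : ℕ) (K : Set ℂ) : Prop :=
  ∃ c ≥ (1 : ℝ), ∃ M : ℕ, 1 ≤ M ∧ ∀ v : H2 H, ∀ z ∈ K, ∀ n : ℕ, M ≤ n →
    c⁻¹ * ‖v‖ ^ 2 ≤ |‖a (n + N - 1)‖⁻¹ * (inner ℂ (turanOp a a' b N z n v) v : ℂ).re| ∧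
    |‖a (n + N - 1)‖⁻¹ * (inner ℂ (turanOp a a' b N z n v) v : ℂ).re| ≤ c * ‖v‖ ^ 2

/-- The matrix `𝓑ᵢ(z) = [[0, Id], [−Rᵢ, z Tᵢ − Qᵢ]]`. -/
def calB (T Q R : ℕ → H →L[ℂ] H) (z : ℂ) (i : ℕ) : H2 H →L[ℂ] H2 H :=
  blk 0 1 (-(R i)) (z • T i - Q i)

/-- `ℱ(λ) = sym([[0, −C_{N-1}], [C_{N-1}^*, 0]] · 𝓑_{N-1}(λ)⋯𝓑₀(λ))` from Theorem B. -/
def calF (T Q R C : ℕ → H →L[ℂ] H) (N : ℕ) (lam : ℝ) : H2 H →L[ℂ] H2 H :=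
  sym (blk 0 (-(C (N - 1))) (adjoint (C (N - 1))) 0 ∘L prodD (calB T Q R (lam : ℂ)) 0 N)

/-- The quadratic-form operator of the commutator approach (`al` is the sequence `α`):
`sym [[α_{n-1} a_{n-1}^*, −α_{n-1}(λ − bₙ)], [0, αₙ aₙ^*]]`. -/
def commOp (a b al : ℕ → H →L[ℂ] H) (lam : ℝ) (n : ℕ) : H2 H →L[ℂ] H2 H :=
  sym (blk (al (n - 1) ∘L adjoint (a (n - 1)))
    (-(al (n - 1) ∘L ((lam : ℂ) • (1 : H →L[ℂ] H) - b n))) 0 (al n ∘L adjoint (a n)))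

/-- `Sₙ(α, λ)` of the commutator approach. -/
def commS (a b al : ℕ → H →L[ℂ] H) (lam : ℝ) (u : ℕ → H) (n : ℕ) : ℝ :=
  (inner ℂ (commOp a b al lam n (pr (u (n - 1)) (u n))) (pr (u (n - 1)) (u n)) : ℂ).re

/-- `sym [[αₙ aₙ^*, −(λ − bₙ) aₙ₋₁⁻¹ αₙ₋₁ aₙ], [0, aₙ^* aₙ₋₁⁻¹ αₙ₋₁ aₙ]]`;
its normalisation converges to `C(λ)`. -/
def climOp (a a' b al : ℕ → H →L[ℂ] H) (lam : ℝ) (n : ℕ) : H2 H →L[ℂ] H2 H :=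
  sym (blk (al n ∘L adjoint (a n))
    (-((((lam : ℂ) • (1 : H →L[ℂ] H) - b n)) ∘L a' (n - 1) ∘L al (n - 1) ∘L a n))
    0
    (adjoint (a n) ∘L a' (n - 1) ∘L al (n - 1) ∘L a n))

/-- Consecutive pairs `(uₙ, uₙ₊₁)` of the generalised eigenvector with initial data `α`. -/
def genPair (a a' b : ℕ → H →L[ℂ] H) (z : ℂ) (α : H2 H) : ℕ → H × H
  | 0 => (WithLp.equiv 2 (H × H)) α
  | n + 1 =>
      let p := genPair a a' b z α n
      (p.2, a' (n + 1) (z • p.2 - b (n + 1) p.2 - adjoint (a n) p.1))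

/-- The generalised eigenvector with initial data `(u₀, u₁)ᵗ = α`. -/
def genVec (a a' b : ℕ → H →L[ℂ] H) (z : ℂ) (α : H2 H) (n : ℕ) : H :=
  (genPair a a' b z α n).1

/-- Iterated logarithm `log^{(i)}`. -/
def iterLog : ℕ → ℝ → ℝ
  | 0, x => x
  | i + 1, x => Real.log (iterLog i x)

/-- `g_j(x) = ∏_{i=1}^j log^{(i)}(x)`. -/
def gfun (j : ℕ) (x : ℝ) : ℝ := ∏ i ∈ Finset.Icc 1 j, iterLog i x

/-!
By the recurrence, `Sₙ₊₁(α, λ)` is the quadratic form of `climOp (n + 1)` at `(uₙ₊₁, uₙ₊₂)`.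
Since `climOp n / ‖αₙ aₙ^*‖` converges, `‖climOp n‖ ≤ K ‖αₙ aₙ^*‖` for some `K` and all large
`n`, so the lower bound `ε ≤ Sₙ` gives `1 / ‖αₙ aₙ^*‖ ≤ (K / ε) (‖uₙ‖² + ‖uₙ₊₁‖²)` eventually.
If `u` were in `ℓ²`, the series `∑ 1 / ‖αₙ aₙ^*‖` would therefore converge.
-/

omit [CompleteSpace H] in
lemma inner_pr (x y x' y' : H) :
    (inner ℂ (pr x y) (pr x' y') : ℂ) = inner ℂ x x' + inner ℂ y y' := by
  simp [pr, WithLp.prod_inner_apply]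

omit [CompleteSpace H] in
lemma blk_pr (A B C D : H →L[ℂ] H) (x y : H) :
    blk A B C D (pr x y) = pr (A x + B y) (C x + D y) := rfl

omit [CompleteSpace H] in
lemma norm_pr_sq (x y : H) : ‖pr x y‖ ^ 2 = ‖x‖ ^ 2 + ‖y‖ ^ 2 := by
  rw [pr, WithLp.prod_norm_sq_eq_of_L2]; rfl

lemma re_inner_sym_apply_self {E : Type*} [NormedAddCommGroup E] [InnerProductSpace ℂ E]
    [CompleteSpace E] (X : E →L[ℂ] E) (v : E) :
    (inner ℂ (sym X v) v : ℂ).re = (inner ℂ (X v) v : ℂ).re := by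
  have hre : (inner ℂ v (X v) : ℂ).re = (inner ℂ (X v) v : ℂ).re := by
    rw [← inner_conj_symm (X v) v, Complex.conj_re]
  simp only [sym, smul_apply, add_apply, inner_smul_left, inner_add_left, adjoint_inner_left,
    map_inv₀, Complex.conj_ofNat, Complex.mul_re, Complex.add_re, hre]
  norm_num
  ring

lemma re_inner_apply_self_le {E : Type*} [NormedAddCommGroup E] [InnerProductSpace ℂ E]
    (X : E →L[ℂ] E) (v : E) : (inner ℂ (X v) v : ℂ).re ≤ ‖X‖ * ‖v‖ ^ 2 :=
  calc (inner ℂ (X v) v : ℂ).re ≤ ‖X v‖ * ‖v‖ := re_inner_le_norm (𝕜 := ℂ) (X v) v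
    _ ≤ ‖X‖ * ‖v‖ * ‖v‖ := by gcongr; exact X.le_opNorm v
    _ = ‖X‖ * ‖v‖ ^ 2 := by ring

lemma eventually_inv_mul_norm_le {E : Type*} [NormedAddCommGroup E] [NormedSpace ℝ E]
    {X : ℕ → E} {ρ : ℕ → ℝ} {C : E} (hρ : ∀ n, 0 ≤ ρ n)
    (hlim : Tendsto (fun n => ‖(ρ n)⁻¹ • X n - C‖) atTop (nhds 0)) :
    ∀ᶠ n in atTop, (ρ n)⁻¹ * ‖X n‖ ≤ ‖C‖ + 1 := by
  have hconv : Tendsto (fun n => ‖(ρ n)⁻¹ • X n‖) atTop (nhds ‖C‖) :=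
    (tendsto_iff_norm_sub_tendsto_zero.2 hlim).norm
  filter_upwards [hconv.eventually_le_const (lt_add_one ‖C‖)] with n hn
  rwa [norm_smul, Real.norm_of_nonneg (inv_nonneg.2 (hρ n))] at hn

lemma one_div_le_of_le_re_inner {E : Type*} [NormedAddCommGroup E] [InnerProductSpace ℂ E]
    {X : E →L[ℂ] E} {v : E} {ρ ε K : ℝ} (hρ : 0 ≤ ρ) (hε : 0 < ε)
    (hX : ρ⁻¹ * ‖X‖ ≤ K) (hεX : ε ≤ (inner ℂ (X v) v : ℂ).re) :
    1 / ρ ≤ ε⁻¹ * K * ‖v‖ ^ 2 := by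
  have key : ε * ρ⁻¹ ≤ K * ‖v‖ ^ 2 :=
    calc ε * ρ⁻¹ ≤ ‖X‖ * ‖v‖ ^ 2 * ρ⁻¹ := by
          gcongr; exact hεX.trans (re_inner_apply_self_le X v)
      _ = ρ⁻¹ * ‖X‖ * ‖v‖ ^ 2 := by ring
      _ ≤ K * ‖v‖ ^ 2 := by gcongr
  calc 1 / ρ = ε⁻¹ * (ε * ρ⁻¹) := by field_simp
    _ ≤ ε⁻¹ * (K * ‖v‖ ^ 2) := by gcongr
    _ = ε⁻¹ * K * ‖v‖ ^ 2 := by ring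

/-- Eliminating `aₙ^* uₙ` through the recurrence turns the left column of `commOp` into the
right column of `climOp`. -/
lemma commS_succ_eq_re_inner_climOp (a b a' al : ℕ → H →L[ℂ] H)
    (hinv : ∀ n, Inverts (a n) (a' n)) (hb : ∀ n, IsSelfAdjoint (b n))
    (lam : ℝ) (u : ℕ → H) (hu : GenEigRec a b (lam : ℂ) u) (n : ℕ) :
    commS a b al lam u (n + 1) =
      (inner ℂ (climOp a a' b al lam (n + 1) (pr (u (n + 1)) (u (n + 2))))
        (pr (u (n + 1)) (u (n + 2))) : ℂ).re := by
  set y := a' n (al n (a (n + 1) (u (n + 2)))) with hy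
  have hay : al n (a (n + 1) (u (n + 2))) = a n y := by
    rw [hy, ← comp_apply (a n), (hinv n).2, one_apply_eq_self]
  have hadj : adjoint (a n) (u n) = (lam : ℂ) • u (n + 1) - b (n + 1) (u (n + 1))
      - a (n + 1) (u (n + 2)) := by
    rw [← hu n]; abel
  have hfold : al n (adjoint (a n) (u n)) + -al n ((lam : ℂ) • u (n + 1) - b (n + 1) (u (n + 1)))
      = -a n y := by
    rw [← hay, ← sub_eq_add_neg, ← map_sub, ← map_neg, hadj]; congr 1; abel
  have hby : (inner ℂ (b (n + 1) y) (u (n + 1)) : ℂ) = inner ℂ y (b (n + 1) (u (n + 1))) := by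
    rw [← adjoint_inner_left, ← star_eq_adjoint, (hb (n + 1)).star_eq]
  unfold commS commOp climOp
  rw [re_inner_sym_apply_self, re_inner_sym_apply_self]
  congr 1
  simp only [Nat.add_sub_cancel, blk_pr, inner_pr, comp_apply, neg_apply, zero_apply, zero_add,
    sub_apply, smul_apply, one_apply_eq_self, ← hy, hfold]
  simp only [inner_neg_left, inner_add_left, inner_sub_left, inner_smul_left,
    ← adjoint_inner_right (a n) y, hadj, inner_sub_right, inner_smul_right, hby,
    adjoint_inner_left, Complex.conj_ofReal]
  ring

theorem statement14_general (a b a' al : ℕ → H →L[ℂ] H)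
    (hinv : ∀ n, Inverts (a n) (a' n)) (hb : ∀ n, IsSelfAdjoint (b n))
    (lam : ℝ)
    (hCl : ∃ Cl : H2 H →L[ℂ] H2 H,
      Tendsto (fun n => ‖(‖al n ∘L adjoint (a n)‖⁻¹ : ℝ) • climOp a a' b al lam n - Cl‖)
        atTop (nhds 0) ∧ StrictlyPos Cl)
    (hdiv : ¬ Summable fun n : ℕ => 1 / ‖al n ∘L adjoint (a n)‖)
    (u : ℕ → H)
    (hu : GenEigRec a b (lam : ℂ) u)
    (hliminf : ∃ ε > (0 : ℝ), ∀ᶠ n in atTop, ε ≤ commS a b al lam u n) :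
    ¬ MemL2 u := by
  intro hL2
  obtain ⟨Cl, hlim, -⟩ := hCl
  obtain ⟨ε, hε, hS⟩ := hliminf
  have hbound := eventually_inv_mul_norm_le (fun n => norm_nonneg _) hlim
  have hpairs : Summable fun n => ‖u n‖ ^ 2 + ‖u (n + 1)‖ ^ 2 :=
    hL2.add ((summable_nat_add_iff 1).2 hL2)
  refine hdiv (.of_norm_bounded_eventually_nat (hpairs.mul_left (ε⁻¹ * (‖Cl‖ + 1))) ?_)
  filter_upwards [hbound, hS, eventually_ge_atTop 1] with n hXn hSn hn
  obtain ⟨m, rfl⟩ := Nat.exists_eq_add_of_le' hn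
  rw [commS_succ_eq_re_inner_climOp a b a' al hinv hb lam u hu] at hSn
  rw [Real.norm_of_nonneg (by positivity), ← norm_pr_sq]
  exact one_div_le_of_le_re_inner (norm_nonneg _) hε hXn hSn

/-- Corollary `cor:1`. -/
theorem statement14 (a b a' al : ℕ → H →L[ℂ] H)
    (hinv : ∀ n, Inverts (a n) (a' n)) (hb : ∀ n, IsSelfAdjoint (b n))
    (lam : ℝ)
    (hCl : ∃ Cl : H2 H →L[ℂ] H2 H,
      Tendsto (fun n => ‖(‖al n ∘L adjoint (a n)‖⁻¹ : ℝ) • climOp a a' b al lam n - Cl‖)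
        atTop (nhds 0) ∧ StrictlyPos Cl)
    (hdiv : ¬ Summable fun n : ℕ => 1 / ‖al n ∘L adjoint (a n)‖)
    (α : H2 H) (hα : α ≠ 0) (u : ℕ → H)
    (hu : GenEigRec a b (lam : ℂ) u) (hu0 : pr (u 0) (u 1) = α)
    (hliminf : ∃ ε > (0 : ℝ), ∀ᶠ n in atTop, ε ≤ commS a b al lam u n) :
    ¬ MemL2 u :=
  statement14_general a b a' al hinv hb lam hCl hdiv u hu hliminf
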